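/- The lexicographically least infinite 7/3-free binary word beginning with 1 is the complement of the Thue–Morse word, i.e., the fixed point of μ starting with 1. -/

import Mathlib

/-- An infinite binary word is 7/3-free if it contains no finite factor of
exponent ≥ 7/3. -/
def SevenThirdsFree (x : ℕ → Fin 2) : Prop :=
  ¬ ∃ i n p : ℕ, 1 ≤ p ∧ p ≤ n ∧ 3 * n ≥ 7 * p ∧
      ∀ j : ℕ, j + p < n → x (i + j) = x (i + j + p)

/-- The Thue–Morse sequence, as an infinite binary word. -/
def tm (n : ℕ) : Fin 2 := if ((Nat.digits 2 n).count 1) % 2 = 1 then 1 else 0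

/-- The complement of the Thue–Morse word (fixed point of μ starting with 1). -/
def tmbar (n : ℕ) : Fin 2 := 1 - tm n

/-- Strict lexicographic order on infinite binary words. -/
def LexLt (x y : ℕ → Fin 2) : Prop :=
  ∃ n : ℕ, (∀ m < n, x m = y m) ∧ x n < y n


lemma tm_zero : tm 0 = 0 := by simp [tm]

lemma tm_even (n : ℕ) : tm (2*n) = tm n := by
  rcases Nat.eq_zero_or_pos n with rfl | h
  · norm_num
  · unfold tm
    rw [Nat.digits_def' (by norm_num : 1 < 2) (by omega : 0 < 2*n)]
    have h1 : 2*n % 2 = 0 := by omega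
    have h2 : 2*n / 2 = n := by omega
    rw [h1, h2]
    simp

lemma tm_odd (n : ℕ) : tm (2*n+1) = 1 - tm n := by
  unfold tm
  rw [Nat.digits_def' (by norm_num : 1 < 2) (by omega : 0 < 2*n+1)]
  have h1 : (2*n+1) % 2 = 1 := by omega
  have h2 : (2*n+1) / 2 = n := by omega
  rw [h1, h2, List.count_cons]
  set c := (Nat.digits 2 n).count 1 with hc
  by_cases h : c % 2 = 1
  · have h0 : (c + 1) % 2 = 0 := by omega
    simp [h, h0]
  · have h' : c % 2 = 0 := by omega
    have h0 : (c + 1) % 2 = 1 := by omega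
    simp [h, h0]

lemma tmbar_even (n : ℕ) : tmbar (2*n) = tmbar n := by unfold tmbar; rw [tm_even]

lemma tmbar_odd (n : ℕ) : tmbar (2*n+1) = 1 - tmbar n := by unfold tmbar; rw [tm_odd]

lemma tmbar_zero : tmbar 0 = 1 := by unfold tmbar; rw [tm_zero]; decide

-- Fin 2 helpers
lemma fin2_sub_inj : ∀ a b : Fin 2, (1:Fin 2) - a = 1 - b → a = b := by decide
lemma fin2_sub_ne : ∀ a : Fin 2, (1:Fin 2) - a ≠ a := by decide
lemma fin2_ne_iff : ∀ a b : Fin 2, a ≠ b → a = 1 - b := by decide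
lemma fin2_trans_ne : ∀ a b c : Fin 2, a ≠ b → b ≠ c → a = c := by decide
lemma fin2_eq_of_ne_ne : ∀ a b c : Fin 2, a ≠ c → b ≠ c → a = b := by decide
lemma fin2_pair : ∀ a b c d : Fin 2, a ≠ b → c ≠ d → a = c → b = d := by decide
lemma fin2_ne_zero : ∀ a : Fin 2, a ≠ 0 → a = 1 := by decide
lemma fin2_ne_one : ∀ a : Fin 2, a ≠ 1 → a = 0 := by decide
lemma fin2_one_sub_eq_zero : ∀ a : Fin 2, (1:Fin 2) = 1 - a → a = 0 := by decide

lemma tm_alt (k : ℕ) : tm (2*k) ≠ tm (2*k+1) := by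
  rw [tm_even, tm_odd]; exact fun h => fin2_sub_ne (tm k) (h.symm)

lemma fin2_sub_sub : ∀ a : Fin 2, (1:Fin 2) - (1 - a) = a := by decide

lemma tm_no_overlap : ∀ p : ℕ, ∀ i : ℕ, 1 ≤ p →
    (∀ j, j ≤ p → tm (i+j) = tm (i+j+p)) → False := by
  intro p
  induction p using Nat.strong_induction_on with
  | _ p IH =>
  intro i hp h
  rcases Nat.even_or_odd p with ⟨q, hq⟩ | ⟨q, hq⟩
  · -- p = q + q, even
    have hq1 : 1 ≤ q := by omega
    rcases Nat.even_or_odd i with ⟨i', hi⟩ | ⟨i', hi⟩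
    · apply IH q (by omega) i' hq1
      intro j hj
      have hh := h (2*j) (by omega)
      rw [show i + 2*j + p = 2*(i'+j+q) by omega, show i + 2*j = 2*(i'+j) by omega,
          tm_even, tm_even] at hh
      exact hh
    · apply IH q (by omega) i' hq1
      intro j hj
      have hh := h (2*j) (by omega)
      rw [show i + 2*j + p = 2*(i'+j+q)+1 by omega, show i + 2*j = 2*(i'+j)+1 by omega,
          tm_odd, tm_odd] at hh
      exact fin2_sub_inj _ _ hh
  · -- p = 2q+1, odd
    have step1 : ∀ r, i ≤ r → r < i + p → tm r ≠ tm (r+1) := by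
      intro r h1 h2
      rcases Nat.even_or_odd r with ⟨k, hk⟩ | ⟨k, hk⟩
      · have := tm_alt k
        rwa [show 2*k = r by omega] at this
      · -- r odd, so r + p even
        have hj1 := h (r - i) (by omega)
        have hj2 := h (r - i + 1) (by omega)
        rw [show i + (r-i) + p = r + p by omega, show i + (r-i) = r by omega] at hj1
        rw [show i + (r-i+1) + p = (r+p)+1 by omega, show i + (r-i+1) = r+1 by omega] at hj2
        have halt := tm_alt (k+q+1)
        rw [show 2*(k+q+1) = r + p by omega, show r+p+1 = (r+p)+1 from rfl] at halt
        intro hcon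
        exact halt (hj1.symm.trans (hcon.trans hj2))
    have step2 : ∀ j, j ≤ p → tm (i+j) = (if j % 2 = 0 then tm i else 1 - tm i) := by
      intro j
      induction j with
      | zero => simp
      | succ j ihj =>
        intro hj
        have prev := ihj (by omega)
        have hne := step1 (i+j) (by omega) (by omega)
        have : tm (i + (j+1)) = 1 - tm (i+j) := by
          rw [show i + (j+1) = (i+j)+1 by omega]
          exact (fin2_ne_iff _ _ (fun e => hne e.symm))
        rw [this, prev]
        by_cases hp2 : j % 2 = 0
        · rw [if_pos hp2, if_neg (by omega)]
        · rw [if_neg hp2, if_pos (by omega)]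
          exact fin2_sub_sub (tm i)
    have h0 := h 0 (by omega)
    have hp2 := step2 p le_rfl
    rw [if_neg (by omega)] at hp2
    rw [show i + 0 = i from rfl] at h0
    exact fin2_sub_ne (tm i) (by rw [← hp2, ← h0])

lemma tm_free : SevenThirdsFree tm := by
  rintro ⟨i, n, p, h1, h2, h3, h⟩
  apply tm_no_overlap p i h1
  intro j hj
  exact h j (by omega)

lemma tmbar_free : SevenThirdsFree tmbar := by
  rintro ⟨i, n, p, h1, h2, h3, h⟩
  exact tm_free ⟨i, n, p, h1, h2, h3, fun j hj => fin2_sub_inj _ _ (h j hj)⟩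

section PartB
variable {x : ℕ → Fin 2}

lemma free_elim (hx : SevenThirdsFree x) (i n p : ℕ) (h1 : 1 ≤ p) (h2 : p ≤ n)
    (h3 : 3*n ≥ 7*p) (h : ∀ j, j + p < n → x (i+j) = x (i+j+p)) : False :=
  hx ⟨i, n, p, h1, h2, h3, h⟩

lemma no_cube (hx : SevenThirdsFree x) (i : ℕ)
    (h1 : x i = x (i+1)) (h2 : x (i+1) = x (i+2)) : False := by
  apply free_elim hx i 3 1 (by omega) (by omega) (by omega)
  intro j hj
  have : j = 0 ∨ j = 1 := by omega
  rcases this with rfl | rfl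
  · simpa using h1
  · rw [show i+1+1 = i+2 by omega]; simpa using h2

lemma no_alt5 (hx : SevenThirdsFree x) (i : ℕ)
    (h0 : x i = x (i+2)) (h1 : x (i+1) = x (i+3)) (h2 : x (i+2) = x (i+4)) : False := by
  apply free_elim hx i 5 2 (by omega) (by omega) (by omega)
  intro j hj
  have : j = 0 ∨ j = 1 ∨ j = 2 := by omega
  rcases this with rfl | rfl | rfl
  · simpa using h0
  · rw [show i+1+2 = i+3 by omega]; simpa using h1
  · rw [show i+2+2 = i+4 by omega]; simpa using h2

lemma no_per3 (hx : SevenThirdsFree x) (i : ℕ)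
    (h0 : x i = x (i+3)) (h1 : x (i+1) = x (i+4)) (h2 : x (i+2) = x (i+5))
    (h3 : x (i+3) = x (i+6)) : False := by
  apply free_elim hx i 7 3 (by omega) (by omega) (by omega)
  intro j hj
  have : j = 0 ∨ j = 1 ∨ j = 2 ∨ j = 3 := by omega
  rcases this with rfl | rfl | rfl | rfl
  · simpa using h0
  · rw [show i+1+3 = i+4 by omega]; simpa using h1
  · rw [show i+2+3 = i+5 by omega]; simpa using h2
  · rw [show i+3+3 = i+6 by omega]; simpa using h3

lemma gap (hx : SevenThirdsFree x) :
    ∀ d a : ℕ, d % 2 = 1 → 1 ≤ a → x a = x (a+1) → x (a+d) = x (a+d+1) → False := by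
  intro d
  induction d using Nat.strong_induction_on with
  | _ d IH =>
  intro a hd ha hpa hpb
  by_cases hmid : ∃ e, a < e ∧ e < a + d ∧ x e = x (e+1)
  · obtain ⟨e, h1, h2, h3⟩ := hmid
    rcases Nat.even_or_odd (e - a) with he | he
    · -- (a+d) - e odd
      apply IH (a+d-e) (by omega) e (by rcases he with ⟨c,hc⟩; omega) (by omega) h3
      rw [show e + (a+d-e) + 1 = a+d+1 by omega, show e + (a+d-e) = a+d by omega]
      exact hpb
    · apply IH (e-a) (by omega) a (by rcases he with ⟨c,hc⟩; omega) ha hpa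
      rw [show a + (e-a) + 1 = e+1 by omega, show a + (e-a) = e by omega]
      exact h3
  · push_neg at hmid
    have hd1 : d = 1 ∨ d = 3 ∨ 5 ≤ d := by omega
    rcases hd1 with rfl | rfl | h5
    · exact no_cube hx a hpa (by rw [show a+2 = a+1+1 by omega]; exact hpb)
    · -- d = 3 : pattern (baa)^2 b around
      obtain ⟨b, rfl⟩ : ∃ b, a = b + 1 := ⟨a - 1, by omega⟩
      have hpa' : x (b+1) = x (b+2) := by rwa [show b+1+1 = b+2 by omega] at hpa
      have n1 : x (b+2) ≠ x (b+3) := by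
        have := hmid (b+2) (by omega) (by omega); rwa [show b+2+1 = b+3 by omega] at this
      have n2 : x (b+3) ≠ x (b+4) := by
        have := hmid (b+3) (by omega) (by omega); rwa [show b+3+1 = b+4 by omega] at this
      have hpb' : x (b+4) = x (b+5) := by
        rw [show b+4 = b+1+3 by omega, show b+5 = b+1+3+1 by omega]; exact hpb
      have nb : x b ≠ x (b+1) := fun e => no_cube hx b e hpa'
      have n5 : x (b+6) ≠ x (b+5) := by
        intro e
        exact no_cube hx (b+4) hpb'
          (by rw [show b+4+1 = b+5 by omega, show b+4+2 = b+6 by omega]; exact e.symm)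
      have e0 : x b = x (b+3) :=
        fin2_eq_of_ne_ne _ _ (x (b+1)) nb (fun e => n1 (by rw [← hpa', ← e]))
      have e1 : x (b+1) = x (b+4) :=
        fin2_eq_of_ne_ne _ _ (x (b+3)) (fun e => n1 (hpa' ▸ e)) (fun e => n2 e.symm)
      have e2 : x (b+2) = x (b+5) := by rw [← hpa', e1, hpb']
      have e3 : x (b+3) = x (b+6) :=
        fin2_eq_of_ne_ne _ _ (x (b+5)) (fun e => n2 (by rw [hpb']; exact e)) n5
      exact no_per3 hx b e0 e1 e2 e3
    · -- 5 ≤ d : alternation of length 5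
      have n1 : x (a+1) ≠ x (a+2) := by
        have := hmid (a+1) (by omega) (by omega); rwa [show a+1+1 = a+2 by omega] at this
      have n2 : x (a+2) ≠ x (a+3) := by
        have := hmid (a+2) (by omega) (by omega); rwa [show a+2+1 = a+3 by omega] at this
      have n3 : x (a+3) ≠ x (a+4) := by
        have := hmid (a+3) (by omega) (by omega); rwa [show a+3+1 = a+4 by omega] at this
      have n4 : x (a+4) ≠ x (a+5) := by
        have := hmid (a+4) (by omega) (by omega); rwa [show a+4+1 = a+5 by omega] at this
      exact no_alt5 hx (a+1)
        (by rw [show a+1+2 = a+3 by omega]; exact fin2_trans_ne _ _ _ n1 n2)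
        (by rw [show a+1+1 = a+2 by omega, show a+1+3 = a+4 by omega]; exact fin2_trans_ne _ _ _ n2 n3)
        (by rw [show a+1+2 = a+3 by omega, show a+1+4 = a+5 by omega]; exact fin2_trans_ne _ _ _ n3 n4)

end PartB

lemma lift {x : ℕ → Fin 2} (hx : SevenThirdsFree x) (hb : ∀ k, x (2*k) ≠ x (2*k+1)) :
    SevenThirdsFree (fun k => x (2*k)) := by
  rintro ⟨i, n, p, h1, h2, h3, h⟩
  apply free_elim hx (2*i) (2*n) (2*p) (by omega) (by omega) (by omega)
  intro j hj
  rcases Nat.even_or_odd j with ⟨l, hl⟩ | ⟨l, hl⟩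
  · have hh := h l (by omega)
    simp only [] at hh
    rw [show 2*i+j+2*p = 2*(i+l+p) by omega, show 2*i+j = 2*(i+l) by omega]
    exact hh
  · have hh := h l (by omega)
    simp only [] at hh
    rw [show 2*i+j+2*p = 2*(i+l+p)+1 by omega, show 2*i+j = 2*(i+l)+1 by omega]
    exact fin2_pair _ _ _ _ (hb (i+l)) (hb (i+l+p)) hh

lemma key : ∀ n : ℕ, ∀ x : ℕ → Fin 2, SevenThirdsFree x →
    (∀ m, m < n → x m = tmbar m) → tmbar n = 1 → x n = 0 → 1 ≤ n → False := by
  intro n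
  induction n using Nat.strong_induction_on with
  | _ n IH =>
  intro x hx hagree htm hxn hn1
  have t1 : tmbar 1 = 0 := by
    have := tmbar_odd 0; rw [tmbar_zero] at this; simpa using this
  have t2 : tmbar 2 = 0 := by
    have := tmbar_even 1; rw [t1] at this; simpa using this
  have hn3 : 3 ≤ n := by
    by_contra hc
    have : n = 1 ∨ n = 2 := by omega
    rcases this with rfl | rfl
    · rw [t1] at htm; exact absurd htm (by decide)
    · rw [t2] at htm; exact absurd htm (by decide)
  have pair1 : x 1 = x 2 := by
    rw [hagree 1 (by omega), hagree 2 (by omega), t1, t2]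
  rcases Nat.even_or_odd n with ⟨m, hm⟩ | ⟨m, hm⟩
  · -- n = 2m
    have hm2 : 2 ≤ m := by omega
    have hblocks : ∀ k, x (2*k) ≠ x (2*k+1) := by
      intro k
      rcases Nat.eq_zero_or_pos k with rfl | hk
      · rw [show 2*0 = 0 by omega, show 2*0+1 = 1 by omega,
            hagree 0 (by omega), hagree 1 (by omega), tmbar_zero, t1]
        decide
      · intro hpair
        apply gap hx (2*k-1) 1 (by omega) (by omega) pair1
        rw [show 1+(2*k-1)+1 = 2*k+1 by omega, show 1+(2*k-1) = 2*k by omega]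
        exact hpair
    apply IH m (by omega) (fun k => x (2*k)) (lift hx hblocks) ?_ ?_ ?_ (by omega)
    · intro k hk
      rw [hagree (2*k) (by omega), tmbar_even]
    · rw [← tmbar_even m, show 2*m = n by omega]; exact htm
    · rw [show 2*m = n by omega]; exact hxn
  · -- n = 2m+1
    have hm1 : 1 ≤ m := by omega
    have htmm : tmbar m = 0 := by
      have h := tmbar_odd m
      rw [show 2*m+1 = n by omega, htm] at h
      exact fin2_one_sub_eq_zero _ h
    have pairE : x (2*m) = x (2*m+1) := by
      rw [hagree (2*m) (by omega), tmbar_even, htmm, show 2*m+1 = n by omega, hxn]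
    apply gap hx (2*m-1) 1 (by omega) (by omega) pair1
    rw [show 1+(2*m-1)+1 = 2*m+1 by omega, show 1+(2*m-1) = 2*m by omega]
    exact pairE

/-- The lexicographically least infinite 7/3-free binary word beginning with 1
is the complement of Thue–Morse. -/
theorem lex_least_seventhirds_free_starting_one :
    (SevenThirdsFree tmbar ∧ tmbar 0 = 1) ∧
    ∀ x : ℕ → Fin 2, SevenThirdsFree x → x 0 = 1 → (x = tmbar ∨ LexLt tmbar x) := by
  refine ⟨⟨tmbar_free, tmbar_zero⟩, ?_⟩
  intro x hx hx0
  by_cases hxe : x = tmbar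
  · exact Or.inl hxe
  · right
    have hne : ∃ n, x n ≠ tmbar n := by
      by_contra hc; push_neg at hc; exact hxe (funext hc)
    classical
    set n := Nat.find hne with hn
    have hspec : x n ≠ tmbar n := Nat.find_spec hne
    have hmin : ∀ m, m < n → x m = tmbar m := fun m hm => not_not.mp (Nat.find_min hne hm)
    have hn1 : 1 ≤ n := by
      rcases Nat.eq_zero_or_pos n with h0 | h
      · exact absurd (by rw [h0, hx0, tmbar_zero]) hspec
      · exact h
    have htmn : tmbar n = 0 := by
      by_contra hc
      have h1 : tmbar n = 1 := fin2_ne_zero _ hc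
      have hxn : x n = 0 := fin2_ne_one _ (fun e => hspec (e.trans h1.symm))
      exact key n x hx hmin h1 hxn hn1
    refine ⟨n, fun m hm => (hmin m hm).symm, ?_⟩
    have hx1 : x n = 1 := fin2_ne_zero _ (fun e => hspec (e.trans htmn.symm))
    rw [htmn, hx1]
    decide
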